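/- arXiv:2305.14110 — 3 statements merged into one kernel-verified Lean document; each statement's English description precedes it below -/
import Mathlib

section
/- Let A = (A_1, …, A_m) be a POVM on ℂ^d with all elements nonzero. Then γ(A) = d if and only if there exist an orthonormal basis e_1, …, e_d of ℂ^d, a function f : {1, …, m} → {1, …, d}, and positive reals c_1, …, c_m such that A_j = c_j · e_{f(j)} e_{f(j)}ᴴ for every j (i.e., A is equivalent to a rank-1 PVM). -/
open Matrix
open scoped ComplexOrder

def IsPOVM {d m : ℕ} (A : Fin m → Matrix (Fin d) (Fin d) ℂ) : Prop :=
  (∀ j, (A j).PosSemidef) ∧ ∑ j, A j = 1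

/-- Transition graph of a POVM: distinct `j, k` adjacent iff `tr(A_j A_k) ≠ 0`. -/
def transitionGraph {d m : ℕ} (A : Fin m → Matrix (Fin d) (Fin d) ℂ) :
    SimpleGraph (Fin m) where
  Adj j k := j ≠ k ∧ (A j * A k).trace ≠ 0
  symm := by
    constructor
    intro j k h
    exact ⟨h.1.symm, by rw [Matrix.trace_mul_comm]; exact h.2⟩
  loopless := by constructor; intro j h; exact h.1 rfl

/-- Number of connected components of the transition graph. -/
noncomputable def gammaPOVM {d m : ℕ} (A : Fin m → Matrix (Fin d) (Fin d) ℂ) : ℕ :=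
  Nat.card (transitionGraph A).ConnectedComponent

/-!
If `γ(A) = d`, pick in each connected component a nonzero vector in the range of one of its
members. Members of different components satisfy `tr(A_j A_k) = 0`, hence `A_j A_k = 0` since
both are positive semidefinite, so these `d` vectors are pairwise orthogonal and, once
normalised, form an orthonormal basis `e`. Each `A_j` annihilates every basis vector but the one
of its own component; being positive semidefinite and nonzero, it is then a positive multiple
of that rank-one projector. Conversely, for such an `A` one has
`tr(A_j A_k) = c_j c_k [f j = f k]`, so the components are the fibres of `f`, and `∑ A_j = 1`
forces `f` to be surjective.
-/

namespace Matrix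

variable {𝕜 n : Type*} [RCLike 𝕜] [Fintype n]

open scoped MatrixOrder in
theorem PosSemidef.mul_eq_zero_of_trace_mul_eq_zero {M N : Matrix n n 𝕜} (hM : M.PosSemidef)
    (hN : N.PosSemidef) (h : (M * N).trace = 0) : M * N = 0 := by
  classical
  obtain ⟨B, rfl⟩ := CStarAlgebra.nonneg_iff_eq_star_mul_self.mp hM.nonneg
  obtain ⟨C, rfl⟩ := CStarAlgebra.nonneg_iff_eq_star_mul_self.mp hN.nonneg
  simp only [star_eq_conjTranspose] at h ⊢
  have hCB : C * Bᴴ = 0 := by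
    rw [← trace_conjTranspose_mul_self_eq_zero_iff, ← h, conjTranspose_mul,
      conjTranspose_conjTranspose, ← Matrix.mul_assoc, trace_mul_cycle]
    simp only [Matrix.mul_assoc]
  calc Bᴴ * B * (Cᴴ * C) = Bᴴ * (C * Bᴴ)ᴴ * C := by
        rw [conjTranspose_mul, conjTranspose_conjTranspose]; noncomm_ring
    _ = 0 := by rw [hCB, conjTranspose_zero, Matrix.mul_zero, Matrix.zero_mul]

theorem exists_mulVec_ne_zero {M : Matrix n n 𝕜} (hM : M ≠ 0) : ∃ w, M *ᵥ w ≠ 0 := by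
  by_contra! h
  exact hM (ext_iff_mulVec.mpr fun w => by rw [h w, zero_mulVec])

theorem exists_smul_orthonormal {κ : Type*} [DecidableEq κ] {u : κ → n → 𝕜}
    (hu : ∀ c, u c ≠ 0) (horth : ∀ c c', c ≠ c' → star (u c) ⬝ᵥ u c' = 0) :
    ∃ r : κ → 𝕜, ∀ c c', star (r c • u c) ⬝ᵥ (r c' • u c') = if c = c' then 1 else 0 := by
  have hpos (c : κ) : 0 < star (u c) ⬝ᵥ u c := dotProduct_star_self_pos_iff.mpr (hu c)
  choose s hs hs_eq using fun c => RCLike.pos_iff_exists_ofReal.mp (hpos c)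
  refine ⟨fun c => ((√(s c))⁻¹ : ℝ), fun c c' => ?_⟩
  rw [star_smul, smul_dotProduct, dotProduct_smul, RCLike.star_def, RCLike.conj_ofReal]
  split_ifs with h
  · subst h
    rw [← hs_eq, smul_smul, smul_eq_mul, ← RCLike.ofReal_mul, ← RCLike.ofReal_mul, ← sq,
      inv_pow, Real.sq_sqrt (hs c).le, inv_mul_cancel₀ (hs c).ne', RCLike.ofReal_one]
  · rw [horth c c' h, smul_zero, smul_zero]

theorem exists_orthonormal_mulVec_eq_zero {ι κ : Type*} [DecidableEq κ] (A : ι → Matrix n n 𝕜)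
    (hA : ∀ j, (A j).PosSemidef) (hA0 : ∀ j, A j ≠ 0) {g : ι → κ} (hg : Function.Surjective g)
    (hmul : ∀ j k, g j ≠ g k → A j * A k = 0) :
    ∃ e : κ → n → 𝕜, (∀ c c', star (e c) ⬝ᵥ e c' = if c = c' then 1 else 0) ∧
      ∀ j c, g j ≠ c → A j *ᵥ e c = 0 := by
  choose rep hrep using hg
  choose w hw using fun c => exists_mulVec_ne_zero (hA0 (rep c))
  let u := fun c => A (rep c) *ᵥ w c
  have hkill (j : ι) (c : κ) (hjc : g j ≠ c) : A j *ᵥ u c = 0 := by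
    rw [mulVec_mulVec, hmul j (rep c) (by rwa [hrep c]), zero_mulVec]
  have horth (c c' : κ) (hcc' : c ≠ c') : star (u c) ⬝ᵥ u c' = 0 := by
    rw [star_mulVec, ← dotProduct_mulVec, (hA (rep c)).isHermitian.eq,
      hkill (rep c) c' (by rwa [hrep c]), dotProduct_zero]
  obtain ⟨r, hr⟩ := exists_smul_orthonormal hw horth
  exact ⟨fun c => r c • u c, hr, fun j c hjc => by rw [mulVec_smul, hkill j c hjc, smul_zero]⟩

variable [DecidableEq n] {e : n → n → 𝕜}

theorem sum_vecMulVec_star_eq_one (he : ∀ i i', star (e i) ⬝ᵥ e i' = if i = i' then 1 else 0) :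
    ∑ i, vecMulVec (e i) (star (e i)) = 1 := by
  let U : Matrix n n 𝕜 := of fun x i => e i x
  have hU : Uᴴ * U = 1 := by
    ext i i'
    simpa [U, mul_apply, one_apply, dotProduct] using he i i'
  have hU' : U * Uᴴ = 1 := mul_eq_one_comm.mp hU
  ext x y
  simpa [U, mul_apply, sum_apply, vecMulVec_apply] using congr_fun₂ hU' x y

theorem trace_vecMulVec_star_mul_vecMulVec_star
    (he : ∀ i i', star (e i) ⬝ᵥ e i' = if i = i' then 1 else 0) (i i' : n) :
    (vecMulVec (e i) (star (e i)) * vecMulVec (e i') (star (e i'))).trace =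
      if i = i' then 1 else 0 := by
  rw [vecMulVec_mul_vecMulVec, trace_vecMulVec, he, dotProduct_comm, ite_smul, one_smul,
    zero_smul]
  split_ifs with h
  · rw [h, he, if_pos rfl]
  · rw [zero_dotProduct]

theorem surjective_of_sum_smul_vecMulVec_eq_one {ι : Type*} [Fintype ι]
    (he : ∀ i i', star (e i) ⬝ᵥ e i' = if i = i' then 1 else 0) {f : ι → n} {c : ι → 𝕜}
    (hsum : ∑ j, c j • vecMulVec (e (f j)) (star (e (f j))) = 1) : Function.Surjective f := by
  intro i
  by_contra! hi
  have h := congr_arg (fun M => (M * vecMulVec (e i) (star (e i))).trace) hsum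
  simp only [Finset.sum_mul, trace_sum, smul_mul, trace_smul,
    trace_vecMulVec_star_mul_vecMulVec_star he, if_neg (hi _), smul_zero, Finset.sum_const_zero,
    Matrix.one_mul, trace_vecMulVec] at h
  rw [dotProduct_comm, he, if_pos rfl] at h
  exact zero_ne_one h

theorem IsHermitian.eq_smul_vecMulVec_of_mulVec_eq_zero {M : Matrix n n 𝕜} (hM : M.IsHermitian)
    (he : ∀ i i', star (e i) ⬝ᵥ e i' = if i = i' then 1 else 0) {i₀ : n}
    (hker : ∀ i, i ≠ i₀ → M *ᵥ e i = 0) :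
    M = (star (e i₀) ⬝ᵥ M *ᵥ e i₀) • vecMulVec (e i₀) (star (e i₀)) := by
  set P := vecMulVec (e i₀) (star (e i₀))
  have hMP : M = M * P := by
    conv_lhs => rw [← M.mul_one, ← sum_vecMulVec_star_eq_one he, Finset.mul_sum]
    refine Finset.sum_eq_single i₀ (fun i _ hi => ?_) (by simp)
    rw [mul_vecMulVec, hker i hi, zero_vecMulVec]
  have hPM : M = P * M := by
    simpa only [conjTranspose_mul, hM.eq, P, conjTranspose_vecMulVec, star_star] using
      congr_arg Matrix.conjTranspose hMP
  calc M = P * M * P := by rw [← hPM, ← hMP]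
    _ = _ := by
      rw [vecMulVec_mul, vecMulVec_mul_vecMulVec, ← dotProduct_mulVec, vecMulVec_smul]

theorem PosSemidef.exists_pos_smul_vecMulVec_of_mulVec_eq_zero {M : Matrix n n 𝕜}
    (hM : M.PosSemidef) (hM0 : M ≠ 0)
    (he : ∀ i i', star (e i) ⬝ᵥ e i' = if i = i' then 1 else 0) {i₀ : n}
    (hker : ∀ i, i ≠ i₀ → M *ᵥ e i = 0) :
    ∃ c : ℝ, 0 < c ∧ M = (c : 𝕜) • vecMulVec (e i₀) (star (e i₀)) := by
  have hM_eq := hM.isHermitian.eq_smul_vecMulVec_of_mulVec_eq_zero he hker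
  have hpos : 0 < star (e i₀) ⬝ᵥ M *ᵥ e i₀ := by
    refine (hM.dotProduct_mulVec_nonneg _).lt_of_ne' fun h => hM0 ?_
    rw [hM_eq, h, zero_smul]
  obtain ⟨c, hc, hc_eq⟩ := RCLike.pos_iff_exists_ofReal.mp hpos
  exact ⟨c, hc, hc_eq ▸ hM_eq⟩

theorem exists_pos_smul_vecMulVec_of_mul_eq_zero {ι : Type*} (A : ι → Matrix n n 𝕜)
    (hA : ∀ j, (A j).PosSemidef) (hA0 : ∀ j, A j ≠ 0) {g : ι → n} (hg : Function.Surjective g)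
    (hmul : ∀ j k, g j ≠ g k → A j * A k = 0) :
    ∃ (e : n → n → 𝕜) (c : ι → ℝ), (∀ i i', star (e i) ⬝ᵥ e i' = if i = i' then 1 else 0) ∧
      (∀ j, 0 < c j) ∧ ∀ j, A j = (c j : 𝕜) • vecMulVec (e (g j)) (star (e (g j))) := by
  obtain ⟨e, he, hker⟩ := exists_orthonormal_mulVec_eq_zero A hA hA0 hg hmul
  choose c hc hAc using fun j =>
    (hA j).exists_pos_smul_vecMulVec_of_mulVec_eq_zero (hA0 j) he fun i hi => hker j i hi.symm
  exact ⟨e, c, he, hc, hAc⟩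

end Matrix

namespace SimpleGraph

variable {V β : Type*} {G : SimpleGraph V} {f : V → β}

theorem reachable_iff_eq_of_adj_iff (hadj : ∀ v w, G.Adj v w ↔ v ≠ w ∧ f v = f w) {v w : V} :
    G.Reachable v w ↔ f v = f w := by
  rw [reachable_iff_reflTransGen]
  refine ⟨fun h => ?_, fun h => ?_⟩
  · induction h with
    | refl => rfl
    | tail _ hadj' ih => exact ih.trans ((hadj _ _).mp hadj').2
  · by_cases hvw : v = w
    · exact hvw ▸ .refl
    · exact .single ((hadj v w).mpr ⟨hvw, h⟩)

theorem card_connectedComponent_eq_of_adj_iff (hadj : ∀ v w, G.Adj v w ↔ v ≠ w ∧ f v = f w)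
    (hf : Function.Surjective f) : Nat.card G.ConnectedComponent = Nat.card β := by
  let F : G.ConnectedComponent → β :=
    ConnectedComponent.lift f fun _ _ p _ => (reachable_iff_eq_of_adj_iff hadj).mp p.reachable
  refine Nat.card_congr (Equiv.ofBijective F ⟨fun c c' => ?_, fun b => ?_⟩)
  · induction c, c' using ConnectedComponent.ind₂ with
    | h v w => exact fun h => ConnectedComponent.eq.mpr ((reachable_iff_eq_of_adj_iff hadj).mpr h)
  · obtain ⟨v, rfl⟩ := hf b
    exact ⟨G.connectedComponentMk v, rfl⟩

end SimpleGraph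

theorem transitionGraph_mul_eq_zero {d m : ℕ} {A : Fin m → Matrix (Fin d) (Fin d) ℂ}
    (hA : ∀ j, (A j).PosSemidef) {j k : Fin m}
    (hjk : (transitionGraph A).connectedComponentMk j ≠
      (transitionGraph A).connectedComponentMk k) :
    A j * A k = 0 := by
  refine (hA j).mul_eq_zero_of_trace_mul_eq_zero (hA k) ?_
  by_contra htr
  exact hjk (SimpleGraph.ConnectedComponent.connectedComponentMk_eq_of_adj
    ⟨fun h => hjk (h ▸ rfl), htr⟩)

theorem transitionGraph_adj_iff {d m : ℕ} {A : Fin m → Matrix (Fin d) (Fin d) ℂ}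
    {e : Fin d → Fin d → ℂ} (he : ∀ i i', star (e i) ⬝ᵥ e i' = if i = i' then 1 else 0)
    {f : Fin m → Fin d} {c : Fin m → ℝ} (hc : ∀ j, 0 < c j)
    (hAe : ∀ j, A j = (c j : ℂ) • vecMulVec (e (f j)) (star (e (f j)))) (j k : Fin m) :
    (transitionGraph A).Adj j k ↔ j ≠ k ∧ f j = f k := by
  have htr : (A j * A k).trace = c j * c k * if f j = f k then 1 else 0 := by
    rw [hAe, hAe, smul_mul, Matrix.mul_smul, trace_smul, trace_smul,
      trace_vecMulVec_star_mul_vecMulVec_star he, smul_eq_mul, smul_eq_mul, mul_assoc]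
  have hcc : (c j : ℂ) * c k ≠ 0 := by exact_mod_cast (mul_pos (hc j) (hc k)).ne'
  simp only [transitionGraph, htr, ne_eq, mul_eq_zero, hcc, ite_eq_right_iff, one_ne_zero,
    false_or, not_forall, not_false_eq_true, exists_prop, and_true]

/-- `γ(A) = d` iff `A` is equivalent to a rank-1 PVM, i.e. each `A_j` is a positive
multiple of a rank-one projector `e_{f(j)} e_{f(j)}ᴴ` built from an orthonormal
basis `e_1, …, e_d` of `ℂ^d`. -/
theorem stmt_2 {d m : ℕ}
    (A : Fin m → Matrix (Fin d) (Fin d) ℂ)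
    (hA : IsPOVM A) (hA0 : ∀ j, A j ≠ 0) :
    gammaPOVM A = d ↔
      ∃ (e : Fin d → Fin d → ℂ) (f : Fin m → Fin d) (c : Fin m → ℝ),
        (∀ i i', ∑ x, star (e i x) * e i' x = if i = i' then 1 else 0) ∧
        (∀ j, 0 < c j) ∧
        (∀ j, A j = (c j : ℂ) •
          Matrix.vecMulVec (e (f j)) (fun b => star (e (f j) b))) := by
  constructor
  · intro hγ
    let φ := Finite.equivFinOfCardEq hγ
    obtain ⟨e, c, he, hc, hAc⟩ := exists_pos_smul_vecMulVec_of_mul_eq_zero A hA.1 hA0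
      (g := φ ∘ (transitionGraph A).connectedComponentMk)
      (φ.surjective.comp fun C => C.exists_rep)
      fun j k hjk => transitionGraph_mul_eq_zero hA.1 fun h => hjk (congr_arg φ h)
    exact ⟨e, _, c, he, hc, hAc⟩
  · rintro ⟨e, f, c, he, hc, hAe⟩
    have hsurj : Function.Surjective f := surjective_of_sum_smul_vecMulVec_eq_one he
      ((Finset.sum_congr rfl fun j _ => (hAe j).symm).trans hA.2)
    rw [gammaPOVM, SimpleGraph.card_connectedComponent_eq_of_adj_iff
      (transitionGraph_adj_iff he hc hAe) hsurj, Nat.card_eq_fintype_card, Fintype.card_fin]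
end

section
/- Let ρ be a state on ℂ^d and let A, B be POVMs on ℂ^d with all elements nonzero. Then F(ρ,A) = F(ρ,B) if and only if Ī ∘ F(ρ,A) ∘ Ī = Ī ∘ F(ρ,B) ∘ Ī. -/
open Matrix
open scoped ComplexOrder

/-- The Fisher superoperator `F(ρ,A)(C) = Σ_j (tr(A_j C)/tr(ρ A_j)) A_j`. -/
noncomputable def fisherMap {d m : ℕ} (ρ : Matrix (Fin d) (Fin d) ℂ)
    (A : Fin m → Matrix (Fin d) (Fin d) ℂ) :
    Matrix (Fin d) (Fin d) ℂ →ₗ[ℂ] Matrix (Fin d) (Fin d) ℂ where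
  toFun C := ∑ j, ((A j * C).trace / (ρ * A j).trace) • A j
  map_add' X Y := by
    simp [Matrix.mul_add, add_div, add_smul, Finset.sum_add_distrib]
  map_smul' c X := by
    simp [Matrix.mul_smul, Finset.smul_sum, smul_smul, mul_div_assoc]

/-- `Ī`: the orthogonal projection onto traceless matrices, `C ↦ C − (tr C / d)·I`. -/
noncomputable def tracelessProj (d : ℕ) :
    Matrix (Fin d) (Fin d) ℂ →ₗ[ℂ] Matrix (Fin d) (Fin d) ℂ where
  toFun C := C - (C.trace / d) • 1
  map_add' X Y := by
    simp only [Matrix.trace_add, add_div, add_smul]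
    abel
  map_smul' c X := by
    simp only [Matrix.trace_smul, smul_eq_mul, RingHom.id_apply, smul_sub, smul_smul,
      mul_div_assoc]

/-!
Both Fisher maps send `ρ` to `I` and satisfy `tr (ρ F(C)) = tr C`, because the POVM sums to `I`
and `tr (ρ A_j) ≠ 0`. Their difference `D` therefore kills `ρ` and has `ρ`-trace-free range. If
`Ī D Ī = 0`, write `C = (C - tr C • ρ) + tr C • ρ`: the first summand is traceless, so `D C` is a
multiple of `I`, and since `tr ρ = 1` its vanishing `ρ`-trace forces that multiple to be `0`.
-/

open scoped MatrixOrder in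
/-- `tr (ρ X) = tr (√ρ X √ρ)` is the trace of a positive semidefinite matrix, and `√ρ` is
invertible. -/
theorem Matrix.PosDef.trace_mul_ne_zero {ι : Type*} [Fintype ι] [DecidableEq ι]
    {ρ X : Matrix ι ι ℂ} (hρ : ρ.PosDef) (hX : X.PosSemidef) (hX0 : X ≠ 0) :
    (ρ * X).trace ≠ 0 := by
  set s := CFC.sqrt ρ
  have hs : s * s = ρ := CFC.sqrt_mul_sqrt_self ρ hρ.posSemidef.nonneg
  have hsH : sᴴ = s := (CFC.sqrt_nonneg ρ).posSemidef.isHermitian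
  have hsU : IsUnit s := (CFC.isUnit_sqrt_iff ρ hρ.posSemidef.nonneg).mpr hρ.isUnit
  intro h
  have hconj : (sᴴ * X * s).trace = 0 := by
    rw [hsH, trace_mul_comm, ← Matrix.mul_assoc, hs, h]
  have := (hX.conjTranspose_mul_mul_same s).trace_eq_zero_iff.mp hconj
  rw [hsH, hsU.mul_left_eq_zero, hsU.mul_right_eq_zero] at this
  exact hX0 this

section TracelessProj

variable {d : ℕ}

theorem tracelessProj_apply (C : Matrix (Fin d) (Fin d) ℂ) :
    tracelessProj d C = C - (C.trace / d) • 1 :=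
  rfl

theorem tracelessProj_of_trace_eq_zero {C : Matrix (Fin d) (Fin d) ℂ} (hC : C.trace = 0) :
    tracelessProj d C = C := by
  rw [tracelessProj_apply, hC, zero_div, zero_smul, sub_zero]

theorem exists_eq_smul_one_of_tracelessProj_eq_zero {C : Matrix (Fin d) (Fin d) ℂ}
    (hC : tracelessProj d C = 0) : ∃ s : ℂ, C = s • 1 :=
  ⟨C.trace / d, sub_eq_zero.mp hC⟩

theorem eq_zero_of_tracelessProj_comp_comp_eq_zero {ρ : Matrix (Fin d) (Fin d) ℂ}
    (hρtr : ρ.trace = 1) {D : Matrix (Fin d) (Fin d) ℂ →ₗ[ℂ] Matrix (Fin d) (Fin d) ℂ}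
    (hDρ : D ρ = 0) (hρD : ∀ C, (ρ * D C).trace = 0)
    (hD : tracelessProj d ∘ₗ D ∘ₗ tracelessProj d = 0) : D = 0 := by
  ext1 C
  set Y := C - C.trace • ρ
  have hY : Y.trace = 0 := by
    rw [trace_sub, trace_smul, hρtr, smul_eq_mul, mul_one, sub_self]
  have hDC : D C = D (tracelessProj d Y) := by
    rw [tracelessProj_of_trace_eq_zero hY, map_sub, map_smul, hDρ, smul_zero, sub_zero]
  obtain ⟨s, hs⟩ : ∃ s : ℂ, D C = s • 1 :=
    exists_eq_smul_one_of_tracelessProj_eq_zero (by rw [hDC]; exact LinearMap.congr_fun hD Y)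
  have hs0 : s = 0 := by
    simpa only [hs, Matrix.mul_smul, Matrix.mul_one, trace_smul, hρtr, smul_eq_mul, mul_one]
      using hρD C
  rw [hs, hs0, zero_smul, LinearMap.zero_apply]

end TracelessProj

section FisherMap

variable {d m : ℕ} {ρ : Matrix (Fin d) (Fin d) ℂ} {A : Fin m → Matrix (Fin d) (Fin d) ℂ}

theorem fisherMap_apply (C : Matrix (Fin d) (Fin d) ℂ) :
    fisherMap ρ A C = ∑ j, ((A j * C).trace / (ρ * A j).trace) • A j :=
  rfl

theorem fisherMap_self (hA : ∑ j, A j = 1) (hρA : ∀ j, (ρ * A j).trace ≠ 0) :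
    fisherMap ρ A ρ = 1 := by
  rw [fisherMap_apply, ← hA]
  refine Finset.sum_congr rfl fun j _ => ?_
  rw [trace_mul_comm, div_self (hρA j), one_smul]

theorem trace_mul_fisherMap (hA : ∑ j, A j = 1) (hρA : ∀ j, (ρ * A j).trace ≠ 0)
    (C : Matrix (Fin d) (Fin d) ℂ) : (ρ * fisherMap ρ A C).trace = C.trace := by
  calc (ρ * fisherMap ρ A C).trace
      = ∑ j, (A j * C).trace / (ρ * A j).trace * (ρ * A j).trace := by
        simp only [fisherMap_apply, Matrix.mul_sum, trace_sum, Matrix.mul_smul, trace_smul,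
          smul_eq_mul]
    _ = ((∑ j, A j) * C).trace := by
        simp only [div_mul_cancel₀ _ (hρA _), Finset.sum_mul, trace_sum]
    _ = C.trace := by rw [hA, Matrix.one_mul]

end FisherMap

/-- `F(ρ,A) = F(ρ,B)` iff `Ī ∘ F(ρ,A) ∘ Ī = Ī ∘ F(ρ,B) ∘ Ī`. -/
theorem stmt_4 {d m n : ℕ}
    (ρ : Matrix (Fin d) (Fin d) ℂ) (hρ : ρ.PosDef) (hρtr : ρ.trace = 1)
    (A : Fin m → Matrix (Fin d) (Fin d) ℂ) (B : Fin n → Matrix (Fin d) (Fin d) ℂ)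
    (hA : IsPOVM A) (hA0 : ∀ j, A j ≠ 0)
    (hB : IsPOVM B) (hB0 : ∀ k, B k ≠ 0) :
    fisherMap ρ A = fisherMap ρ B ↔
      tracelessProj d ∘ₗ fisherMap ρ A ∘ₗ tracelessProj d =
        tracelessProj d ∘ₗ fisherMap ρ B ∘ₗ tracelessProj d := by
  refine ⟨fun h => by rw [h], fun h => sub_eq_zero.mp ?_⟩
  have hρA j : (ρ * A j).trace ≠ 0 := hρ.trace_mul_ne_zero (hA.1 j) (hA0 j)
  have hρB k : (ρ * B k).trace ≠ 0 := hρ.trace_mul_ne_zero (hB.1 k) (hB0 k)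
  refine eq_zero_of_tracelessProj_comp_comp_eq_zero hρtr ?_ (fun C => ?_) ?_
  · rw [LinearMap.sub_apply, fisherMap_self hA.2 hρA, fisherMap_self hB.2 hρB, sub_self]
  · rw [LinearMap.sub_apply, Matrix.mul_sub, trace_sub, trace_mul_fisherMap hA.2 hρA,
      trace_mul_fisherMap hB.2 hρB, sub_self]
  · rw [LinearMap.sub_comp, LinearMap.comp_sub, h, sub_self]
end

section
/- Let ρ be a state on ℂ^d and A = (A_1, …, A_m) a POVM with all elements nonzero that is irreducible (its transition graph is connected). Then the eigenvalue 1 of each of G_S(ρ,A), G_L(ρ,A), G_R(ρ,A) is nondegenerate: μ_1(G_S(ρ,A)) = μ_1(G_L(ρ,A)) = μ_1(G_R(ρ,A)) = 1. -/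
open Matrix
open scoped ComplexOrder

/-- The outcome probabilities `p_j = tr(ρ A_j)` (a real number). -/
noncomputable def pvec {d m : ℕ} (ρ : Matrix (Fin d) (Fin d) ℂ)
    (A : Fin m → Matrix (Fin d) (Fin d) ℂ) (j : Fin m) : ℝ :=
  ((ρ * A j).trace).re

/-- Gram matrix `G_S(ρ,A)`. -/
noncomputable def GmS {d m : ℕ} (ρ : Matrix (Fin d) (Fin d) ℂ)
    (A : Fin m → Matrix (Fin d) (Fin d) ℂ) : Matrix (Fin m) (Fin m) ℂ :=
  Matrix.of fun j k =>
    ((ρ * (A k * A j)).trace + (ρ * (A j * A k)).trace) /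
      (2 * (Real.sqrt (pvec ρ A j * pvec ρ A k) : ℂ))

/-- Gram matrix `G_L(ρ,A)`. -/
noncomputable def GmL {d m : ℕ} (ρ : Matrix (Fin d) (Fin d) ℂ)
    (A : Fin m → Matrix (Fin d) (Fin d) ℂ) : Matrix (Fin m) (Fin m) ℂ :=
  Matrix.of fun j k =>
    (ρ * (A k * A j)).trace / (Real.sqrt (pvec ρ A j * pvec ρ A k) : ℂ)

/-- Gram matrix `G_R(ρ,A)`. -/
noncomputable def GmR {d m : ℕ} (ρ : Matrix (Fin d) (Fin d) ℂ)
    (A : Fin m → Matrix (Fin d) (Fin d) ℂ) : Matrix (Fin m) (Fin m) ℂ :=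
  Matrix.of fun j k =>
    (ρ * (A j * A k)).trace / (Real.sqrt (pvec ρ A j * pvec ρ A k) : ℂ)

/-- `μ_λ(M)`: the multiplicity of `λ` as an eigenvalue of `M`, i.e. `dim ker (M − λ·I)`. -/
noncomputable def eigMul {m : ℕ} (M : Matrix (Fin m) (Fin m) ℂ) (lam : ℝ) : ℕ :=
  Module.finrank ℂ (LinearMap.ker (Matrix.mulVecLin (M - (lam : ℂ) • 1)))

/-!
Put `p_j = tr(ρ A_j)` and, for `c : Fin m → ℂ`, `M_c = ∑ c_k A_k`. Every Gram matrix fixes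
`(√p_j)_j`, and `x` is fixed by `G_R` iff `c = x / √p` solves `tr(ρ A_j M_c) = c_j p_j` for
all `j` (for `G_L` the product is reversed, for `G_S` averaged). The Schwarz gap
`∑_j c̄_j (c_j p_j - tr(ρ A_j M_c)) = ∑_j tr(ρ D_jᴴ A_j D_j)`, `D_j = c_j - M_c`, is
nonnegative, and for a fixed vector it vanishes for `c` or for `c̄`. As `ρ > 0` this forces
`A_j M_c = c_j A_j`, hence `A_j q(M_c) = q(c_j) A_j` for every polynomial `q`. With `q` the
Lagrange basis polynomial of the value `c_k` this gives `q(M_c) = ∑_{c_r = c_k} A_r`, so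
`c_j ≠ c_k` forces `tr(A_j A_k) = 0`. Thus `c` is constant along the edges of the transition graph, hence constant.
-/

open scoped MatrixOrder

namespace Matrix

variable {𝕜 n : Type*} [RCLike 𝕜] [Fintype n] [DecidableEq n]

lemma PosSemidef.trace_mul_nonneg {X Y : Matrix n n 𝕜} (hX : X.PosSemidef) (hY : Y.PosSemidef) :
    0 ≤ (X * Y).trace := by
  obtain ⟨B, rfl⟩ := CStarAlgebra.nonneg_iff_eq_star_mul_self.mp hY.nonneg
  rw [star_eq_conjTranspose, ← Matrix.mul_assoc, trace_mul_cycle]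
  exact (hX.mul_mul_conjTranspose_same B).trace_nonneg

lemma PosSemidef.mul_eq_zero_of_conjTranspose_mul_mul_eq_zero {A D : Matrix n n 𝕜}
    (hA : A.PosSemidef) (h : Dᴴ * A * D = 0) : A * D = 0 := by
  obtain ⟨B, rfl⟩ := CStarAlgebra.nonneg_iff_eq_star_mul_self.mp hA.nonneg
  rw [star_eq_conjTranspose] at h ⊢
  have hBD : B * D = 0 := by
    rw [← conjTranspose_mul_self_eq_zero, conjTranspose_mul]
    simpa only [Matrix.mul_assoc] using h
  rw [Matrix.mul_assoc, hBD, Matrix.mul_zero]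

lemma PosDef.eq_zero_of_trace_mul_eq_zero {ρ N : Matrix n n 𝕜} (hρ : ρ.PosDef)
    (hN : N.PosSemidef) (h : (ρ * N).trace = 0) : N = 0 := by
  obtain ⟨B, rfl⟩ := CStarAlgebra.nonneg_iff_eq_star_mul_self.mp hN.nonneg
  rw [star_eq_conjTranspose] at h ⊢
  have hBρB : B * ρ * Bᴴ = 0 := by
    rw [← (hρ.posSemidef.mul_mul_conjTranspose_same B).trace_eq_zero_iff, trace_mul_cycle,
      trace_mul_comm, h]
  have hB : ∀ x, Bᴴ *ᵥ x = 0 := fun x => by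
    by_contra hx
    have hpos := hρ.dotProduct_mulVec_pos hx
    rw [star_mulVec, conjTranspose_conjTranspose, ← dotProduct_mulVec, mulVec_mulVec,
      mulVec_mulVec, hBρB, zero_mulVec, dotProduct_zero] at hpos
    exact lt_irrefl _ hpos
  have hB0 : Bᴴ = 0 := ext_of_mulVec_single fun i => by rw [hB, zero_mulVec]
  rw [hB0, Matrix.zero_mul]

end Matrix

open Polynomial in
lemma mul_aeval_of_mul_eq_smul {R S : Type*} [CommSemiring R] [Semiring S] [Algebra R S]
    {a x : S} {r : R} (h : a * x = r • a) (q : R[X]) : a * aeval x q = q.eval r • a := by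
  have hpow : ∀ n : ℕ, a * x ^ n = r ^ n • a := fun n => by
    induction n with
    | zero => simp
    | succ n ih => rw [pow_succ, ← mul_assoc, ih, smul_mul_assoc, h, smul_smul, pow_succ]
  induction q using Polynomial.induction_on' with
  | add p q hp hq => rw [map_add, mul_add, hp, hq, eval_add, add_smul]
  | monomial n b =>
    rw [aeval_monomial, Algebra.left_comm, ← Algebra.smul_def, hpow, smul_smul, eval_monomial]

section SchwarzGap

variable {𝕜 ι n : Type*} [RCLike 𝕜] [Fintype ι] [Fintype n]
  {ρ : Matrix n n 𝕜} {A : ι → Matrix n n 𝕜}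

lemma trace_mul_mul_sum_smul (ρ X : Matrix n n 𝕜) (A : ι → Matrix n n 𝕜) (c : ι → 𝕜) :
    (ρ * (X * ∑ k, c k • A k)).trace = ∑ k, (ρ * (X * A k)).trace * c k := by
  simp [Matrix.mul_sum, trace_sum, mul_comm]

lemma trace_mul_sum_smul_mul (ρ X : Matrix n n 𝕜) (A : ι → Matrix n n 𝕜) (c : ι → 𝕜) :
    (ρ * ((∑ k, c k • A k) * X)).trace = ∑ k, (ρ * (A k * X)).trace * c k := by
  simp [Matrix.sum_mul, Matrix.mul_sum, trace_sum, mul_comm]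

variable (ρ A) in
/-- For a POVM this is the Kadison–Schwarz defect `tr ρ (Φ(|c|²) - Φ(c)ᴴ Φ(c))` of the unital
positive map `Φ(c) = ∑ c_k A_k`. -/
def schwarzGap (c : ι → 𝕜) : 𝕜 :=
  ∑ j, star (c j) * (c j * (ρ * A j).trace - (ρ * (A j * ∑ k, c k • A k)).trace)

lemma star_schwarzGap_star (hρ : ρ.IsHermitian) (hA : ∀ j, (A j).IsHermitian) (c : ι → 𝕜) :
    star (schwarzGap ρ A (star c)) =
      ∑ j, star (c j) * (c j * (ρ * A j).trace - (ρ * ((∑ k, c k • A k) * A j)).trace) := by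
  simp only [schwarzGap, star_sum, star_mul', star_sub, ← trace_conjTranspose, conjTranspose_mul,
    conjTranspose_sum, conjTranspose_smul, Pi.star_apply, star_star, hρ.eq, (hA _).eq]
  simp only [trace_mul_comm _ ρ]

variable [DecidableEq n]

lemma sum_mul_smul_one_sub_eq_zero (hsum : ∑ j, A j = 1) (c : ι → 𝕜) :
    ∑ j, A j * (c j • 1 - ∑ k, c k • A k) = 0 := by
  simp [Matrix.mul_sub, Finset.sum_sub_distrib, ← Finset.sum_mul, hsum]

lemma schwarzGap_eq_sum_trace (hsum : ∑ j, A j = 1) (c : ι → 𝕜) :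
    schwarzGap ρ A c = ∑ j, (ρ * ((c j • 1 - ∑ k, c k • A k)ᴴ * A j *
      (c j • 1 - ∑ k, c k • A k))).trace := by
  set M := ∑ k, c k • A k
  calc schwarzGap ρ A c
      = ∑ j, (ρ * (star (c j) • (A j * (c j • 1 - M)))).trace -
          (ρ * (Mᴴ * ∑ j, A j * (c j • 1 - M))).trace := by
        rw [sum_mul_smul_one_sub_eq_zero hsum]
        simp [schwarzGap, Matrix.mul_sub, M]
    _ = ∑ j, (ρ * (star (c j) • (A j * (c j • 1 - M)) - Mᴴ * (A j * (c j • 1 - M)))).trace := by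
        simp only [Matrix.mul_sub, trace_sub, Finset.sum_sub_distrib, Matrix.mul_sum, trace_sum]
    _ = _ := by
        congr 1; ext j
        simp [conjTranspose_sub, Matrix.sub_mul, Matrix.mul_assoc]

lemma schwarzGap_nonneg (hρ : ρ.PosSemidef) (hA : ∀ j, (A j).PosSemidef) (hsum : ∑ j, A j = 1)
    (c : ι → 𝕜) : 0 ≤ schwarzGap ρ A c := by
  rw [schwarzGap_eq_sum_trace hsum]
  exact Finset.sum_nonneg fun j _ =>
    hρ.trace_mul_nonneg ((hA j).conjTranspose_mul_mul_same _)

lemma mul_sum_smul_eq_of_schwarzGap_eq_zero (hρ : ρ.PosDef) (hA : ∀ j, (A j).PosSemidef)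
    (hsum : ∑ j, A j = 1) {c : ι → 𝕜} (h : schwarzGap ρ A c = 0) (j : ι) :
    A j * ∑ k, c k • A k = c j • A j := by
  rw [schwarzGap_eq_sum_trace hsum, Finset.sum_eq_zero_iff_of_nonneg fun j _ =>
    hρ.posSemidef.trace_mul_nonneg ((hA j).conjTranspose_mul_mul_same _)] at h
  have hAD := (hA j).mul_eq_zero_of_conjTranspose_mul_mul_eq_zero
    (hρ.eq_zero_of_trace_mul_eq_zero ((hA j).conjTranspose_mul_mul_same _)
      (h j (Finset.mem_univ j)))
  rw [Matrix.mul_sub, Matrix.mul_smul, Matrix.mul_one, sub_eq_zero] at hAD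
  exact hAD.symm

open Polynomial in
lemma eq_of_mul_sum_smul_eq (hA : ∀ j, (A j).PosSemidef) (hsum : ∑ j, A j = 1) {c : ι → 𝕜}
    (hc : ∀ j, A j * ∑ k, c k • A k = c j • A j) {j k : ι} (hjk : (A j * A k).trace ≠ 0) :
    c j = c k := by
  classical
  by_contra hne
  set q := Lagrange.basis (Finset.univ.image c) id (c k)
  have hq : ∀ r, q.eval (c r) = if c r = c k then 1 else 0 := fun r => by
    split_ifs with hr
    · rw [hr]
      exact Lagrange.eval_basis_self (v := id) (Set.injOn_id _)
        (Finset.mem_image_of_mem c (Finset.mem_univ k))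
    · exact Lagrange.eval_basis_of_ne (v := id) (Ne.symm hr)
        (Finset.mem_image_of_mem c (Finset.mem_univ r))
  set P := aeval (∑ k, c k • A k) q
  have hAP : ∀ r, A r * P = q.eval (c r) • A r := fun r => mul_aeval_of_mul_eq_smul (hc r) q
  have hP : P = ∑ r, q.eval (c r) • A r := by
    rw [← Finset.sum_congr rfl fun r _ => hAP r, ← Finset.sum_mul, hsum, Matrix.one_mul]
  have htr : ∑ r, q.eval (c r) * (A j * A r).trace = 0 := by
    have h0 : (A j * P).trace = 0 := by rw [hAP, hq, if_neg hne, zero_smul, trace_zero]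
    simpa [hP, Matrix.mul_sum, trace_sum] using h0
  rw [Finset.sum_eq_zero_iff_of_nonneg fun r _ => by
    rw [hq]; split_ifs
    · rw [one_mul]; exact (hA j).trace_mul_nonneg (hA r)
    · rw [zero_mul]] at htr
  exact hjk (by simpa [hq] using htr k (Finset.mem_univ k))

end SchwarzGap

lemma SimpleGraph.Preconnected.apply_eq_of_forall_adj {V α : Type*} {G : SimpleGraph V}
    (hG : G.Preconnected) {f : V → α} (hf : ∀ u v, G.Adj u v → f u = f v) (u v : V) :
    f u = f v := by
  obtain ⟨w⟩ := hG u v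
  induction w with
  | nil => rfl
  | cons hadj _ ih => exact (hf _ _ hadj).trans ih

lemma eigMul_div_sqrt_eq_one {m : ℕ} [Nonempty (Fin m)] {T : Fin m → Fin m → ℂ}
    {p : Fin m → ℝ} (hp : ∀ j, 0 < p j) (hrow : ∀ j, ∑ k, T j k = p j)
    (hfix : ∀ c : Fin m → ℂ, (∀ j, ∑ k, T j k * c k = c j * p j) → ∀ j k, c j = c k) :
    eigMul (of fun j k => T j k / (√(p j * p k) : ℂ)) 1 = 1 := by
  set u : Fin m → ℂ := fun j => (√(p j) : ℂ)
  have hu : ∀ j, u j ≠ 0 := fun j => by simp [u, (hp j).le, (hp j).ne']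
  have huu : ∀ j, u j * u j = p j := fun j => by
    simp only [u, ← Complex.ofReal_mul, Real.mul_self_sqrt (hp j).le]
  have hfix_iff : ∀ c : Fin m → ℂ, (of fun j k => T j k / (√(p j * p k) : ℂ)) *ᵥ (c * u) = c * u ↔
      ∀ j, ∑ k, T j k * c k = c j * p j := fun c => by
    simp only [funext_iff, mulVec, dotProduct, of_apply, Pi.mul_apply]
    refine forall_congr' fun j => ?_
    have hterm : ∀ k, T j k / (√(p j * p k) : ℂ) * (c k * u k) = T j k * c k / u j := fun k => by
      rw [Real.sqrt_mul (hp j).le, Complex.ofReal_mul]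
      change T j k / (u j * u k) * (c k * u k) = _
      field_simp [hu j, hu k]
    rw [Finset.sum_congr rfl fun k _ => hterm k, ← Finset.sum_div, div_eq_iff (hu j), mul_assoc,
      huu]
  have hker : LinearMap.ker (mulVecLin (of (fun j k => T j k / (√(p j * p k) : ℂ)) -
      ((1 : ℝ) : ℂ) • 1)) = ℂ ∙ u := by
    ext x
    simp only [LinearMap.mem_ker, mulVecLin_apply, sub_mulVec, Complex.ofReal_one, one_smul,
      one_mulVec, sub_eq_zero, Submodule.mem_span_singleton]
    have hx : x = (x / u) * u := funext fun j => (div_mul_cancel₀ (x j) (hu j)).symm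
    constructor
    · intro hGx
      rw [hx] at hGx
      have hc := hfix _ ((hfix_iff _).1 hGx)
      obtain ⟨j₀⟩ := ‹Nonempty (Fin m)›
      refine ⟨x j₀ / u j₀, funext fun j => ?_⟩
      rw [Pi.smul_apply, smul_eq_mul, ← Pi.div_apply, hc j₀ j, Pi.div_apply,
        div_mul_cancel₀ _ (hu j)]
    · rintro ⟨a, rfl⟩
      refine (hfix_iff fun _ => a).2 fun j => ?_
      rw [← Finset.sum_mul, hrow, mul_comm]
  rw [eigMul, hker, finrank_span_singleton]
  exact fun h => hu (Classical.arbitrary _) (congrFun h _)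

section Gram

variable {d m : ℕ} {ρ : Matrix (Fin d) (Fin d) ℂ} {A : Fin m → Matrix (Fin d) (Fin d) ℂ}

lemma ofReal_pvec (hρ : ρ.PosSemidef) (hA : IsPOVM A) (j : Fin m) :
    (pvec ρ A j : ℂ) = (ρ * A j).trace := by
  refine (Complex.eq_re_of_ofReal_le (r := 0) ?_).symm
  rw [Complex.ofReal_zero]
  exact hρ.trace_mul_nonneg (hA.1 j)

lemma pvec_pos (hρ : ρ.PosDef) (hA : IsPOVM A) {j : Fin m} (hA0 : A j ≠ 0) :
    0 < pvec ρ A j := by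
  have hnonneg := hρ.posSemidef.trace_mul_nonneg (hA.1 j)
  have hne : (ρ * A j).trace ≠ 0 := fun h => hA0 (hρ.eq_zero_of_trace_mul_eq_zero (hA.1 j) h)
  rw [← ofReal_pvec hρ.posSemidef hA] at hnonneg hne
  exact lt_of_le_of_ne (by exact_mod_cast hnonneg) (by exact_mod_cast hne.symm)

lemma IsPOVM.eq_of_schwarzGap_eq_zero (hA : IsPOVM A) (hρ : ρ.PosDef)
    (hirr : (transitionGraph A).Preconnected) {c : Fin m → ℂ} (h : schwarzGap ρ A c = 0)
    (j k : Fin m) : c j = c k :=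
  hirr.apply_eq_of_forall_adj (fun _ _ hadj => eq_of_mul_sum_smul_eq hA.1 hA.2
    (mul_sum_smul_eq_of_schwarzGap_eq_zero hρ hA.1 hA.2 h) hadj.2) j k

lemma IsPOVM.eigMul_div_sqrt_pvec_eq_one (hA : IsPOVM A) (hρ : ρ.PosDef) (hA0 : ∀ j, A j ≠ 0)
    [Nonempty (Fin m)] {T : Fin m → Fin m → ℂ} (hrow : ∀ j, ∑ k, T j k = (ρ * A j).trace)
    (hfix : ∀ c : Fin m → ℂ, (∀ j, ∑ k, T j k * c k = c j * (ρ * A j).trace) →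
      ∀ j k, c j = c k) :
    eigMul (of fun j k => T j k / (√(pvec ρ A j * pvec ρ A k) : ℂ)) 1 = 1 := by
  simp only [← ofReal_pvec hρ.posSemidef hA] at hrow hfix
  exact eigMul_div_sqrt_eq_one (fun j => pvec_pos hρ hA (hA0 j)) hrow hfix

lemma IsPOVM.eigMul_GmR_one (hA : IsPOVM A) (hρ : ρ.PosDef) (hA0 : ∀ j, A j ≠ 0)
    (hirr : (transitionGraph A).Connected) : eigMul (GmR ρ A) 1 = 1 := by
  have := hirr.nonempty
  refine hA.eigMul_div_sqrt_pvec_eq_one hρ hA0 (fun j => ?_) fun c hc => ?_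
  · rw [← trace_sum, ← Matrix.mul_sum, ← Matrix.mul_sum, hA.2, Matrix.mul_one]
  · refine hA.eq_of_schwarzGap_eq_zero hρ hirr.preconnected (Finset.sum_eq_zero fun j _ => ?_)
    rw [trace_mul_mul_sum_smul, hc, sub_self, mul_zero]

lemma IsPOVM.eigMul_GmL_one (hA : IsPOVM A) (hρ : ρ.PosDef) (hA0 : ∀ j, A j ≠ 0)
    (hirr : (transitionGraph A).Connected) : eigMul (GmL ρ A) 1 = 1 := by
  have := hirr.nonempty
  refine hA.eigMul_div_sqrt_pvec_eq_one hρ hA0 (fun j => ?_) fun c hc j k => ?_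
  · rw [← trace_sum, ← Matrix.mul_sum, ← Matrix.sum_mul, hA.2, Matrix.one_mul]
  · refine star_injective (hA.eq_of_schwarzGap_eq_zero (c := star c) hρ hirr.preconnected ?_ j k)
    rw [← star_eq_zero, star_schwarzGap_star hρ.isHermitian fun j => (hA.1 j).isHermitian]
    refine Finset.sum_eq_zero fun j _ => ?_
    rw [trace_mul_sum_smul_mul, hc, sub_self, mul_zero]

lemma IsPOVM.eigMul_GmS_one (hA : IsPOVM A) (hρ : ρ.PosDef) (hA0 : ∀ j, A j ≠ 0)
    (hirr : (transitionGraph A).Connected) : eigMul (GmS ρ A) 1 = 1 := by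
  have := hirr.nonempty
  have hGmS : GmS ρ A = of fun j k =>
      ((ρ * (A k * A j)).trace + (ρ * (A j * A k)).trace) / 2 /
        (√(pvec ρ A j * pvec ρ A k) : ℂ) := by
    ext j k
    simp [GmS, div_div]
  rw [hGmS]
  refine hA.eigMul_div_sqrt_pvec_eq_one hρ hA0 (fun j => ?_) fun c hc => ?_
  · rw [← Finset.sum_div, Finset.sum_add_distrib, ← trace_sum, ← trace_sum, ← Matrix.mul_sum,
      ← Matrix.sum_mul, ← Matrix.mul_sum, ← Matrix.mul_sum, hA.2, Matrix.one_mul, Matrix.mul_one,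
      add_self_div_two]
  · have hgap := schwarzGap_nonneg hρ.posSemidef hA.1 hA.2 c
    have hgap' := star_nonneg_iff.2 (schwarzGap_nonneg hρ.posSemidef hA.1 hA.2 (star c))
    suffices h : schwarzGap ρ A c + star (schwarzGap ρ A (star c)) = 0 from
      hA.eq_of_schwarzGap_eq_zero hρ hirr.preconnected
        ((add_eq_zero_iff_of_nonneg hgap hgap').1 h).1
    rw [star_schwarzGap_star hρ.isHermitian fun j => (hA.1 j).isHermitian, schwarzGap,
      ← Finset.sum_add_distrib]
    refine Finset.sum_eq_zero fun j _ => ?_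
    have hj := hc j
    simp only [add_div, add_mul, Finset.sum_add_distrib, div_mul_eq_mul_div, ← Finset.sum_div]
      at hj
    rw [trace_mul_mul_sum_smul, trace_mul_sum_smul_mul]
    linear_combination (-2 * star (c j)) * hj

end Gram

theorem stmt_11_general {d m : ℕ}
    (ρ : Matrix (Fin d) (Fin d) ℂ) (hρ : ρ.PosDef)
    (A : Fin m → Matrix (Fin d) (Fin d) ℂ)
    (hA : IsPOVM A) (hA0 : ∀ j, A j ≠ 0)
    (hirr : (transitionGraph A).Connected) :
    eigMul (GmS ρ A) 1 = 1 ∧ eigMul (GmL ρ A) 1 = 1 ∧ eigMul (GmR ρ A) 1 = 1 :=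
  ⟨hA.eigMul_GmS_one hρ hA0 hirr, hA.eigMul_GmL_one hρ hA0 hirr, hA.eigMul_GmR_one hρ hA0 hirr⟩

/-- For an irreducible POVM, the eigenvalue `1` of `G_S`, `G_L`, `G_R` is
nondegenerate. -/
theorem stmt_11 {d m : ℕ}
    (ρ : Matrix (Fin d) (Fin d) ℂ) (hρ : ρ.PosDef) (hρtr : ρ.trace = 1)
    (A : Fin m → Matrix (Fin d) (Fin d) ℂ)
    (hA : IsPOVM A) (hA0 : ∀ j, A j ≠ 0)
    (hirr : (transitionGraph A).Connected) :
    eigMul (GmS ρ A) 1 = 1 ∧ eigMul (GmL ρ A) 1 = 1 ∧ eigMul (GmR ρ A) 1 = 1 :=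
  stmt_11_general ρ hρ A hA hA0 hirr
end
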